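/- arXiv:1806.07881 — 3 statements merged into one kernel-verified Lean document; each statement's English description precedes it below -/
import Mathlib

section
/- Let l ≥ 1 be an integer and define γ_l : (0,∞) → ℝ by γ_l(ρ) = 0 for ρ ≥ 1/l, γ_l(ρ) = l^{l+1}/(l+1)^{l-1} for ρ ∈ [1/(l+1), 1/l), and γ_l(ρ) = l(1-ρ)^{l-1} for ρ ∈ (0, 1/(l+1)). Then ∫_0^∞ γ_l(ρ) dρ = 1. -/
/-- The scale profile `γ_l` of the polynomial spherical wavelet family. -/
noncomputable def gammaScale (l : ℕ) (ρ : ℝ) : ℝ :=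
  if l = 0 then Set.indicator (Set.Icc (1:ℝ) 2) (fun _ => 1) ρ
  else if 1/(l:ℝ) ≤ ρ then 0
  else if 1/((l:ℝ)+1) ≤ ρ then (l:ℝ)^(l+1)/((l:ℝ)+1)^(l-1)
  else (l:ℝ)*(1-ρ)^(l-1)

/-!
On `(0, ∞)` the profile `γ_l` vanishes from `1/l` on, is the constant `c = l^(l+1)/(l+1)^(l-1)`
on `[1/(l+1), 1/l)`, and equals `l (1-ρ)^(l-1)` below. The lower piece integrates to
`1 - (l/(l+1))^l`, and the plateau has mass `(1/l - 1/(l+1)) c = (l/(l+1))^l`.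
-/

open MeasureTheory Set intervalIntegral

theorem integral_Ioi_eq_intervalIntegral_of_eqOn_Ioi {E : Type*} [NormedAddCommGroup E]
    [NormedSpace ℝ E] {f : ℝ → E} {a b : ℝ} (hab : a ≤ b) (hf : EqOn f 0 (Ioi b)) :
    ∫ x in Ioi a, f x = ∫ x in a..b, f x := by
  rw [integral_of_le hab]
  refine setIntegral_eq_of_subset_of_forall_sdiff_eq_zero measurableSet_Ioi Ioc_subset_Ioi_self ?_
  rintro x ⟨hax, hxb⟩
  exact hf (not_le.1 fun h => hxb ⟨hax, h⟩)

theorem integral_natCast_mul_one_sub_pow (l : ℕ) (t : ℝ) :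
    ∫ x in 0..t, (l : ℝ) * (1 - x) ^ (l - 1) = 1 - (1 - t) ^ l := by
  rcases l with _ | n
  · simp
  rw [intervalIntegral.integral_const_mul, integral_comp_sub_left (fun x => x ^ (n + 1 - 1)),
    Nat.add_sub_cancel, integral_pow]
  push_cast
  field_simp
  ring

section gammaScale

variable {l : ℕ} {ρ : ℝ}

theorem gammaScale_of_inv_le (hl : l ≠ 0) (hρ : 1 / (l : ℝ) ≤ ρ) : gammaScale l ρ = 0 := by
  rw [gammaScale, if_neg hl, if_pos hρ]

theorem gammaScale_of_mem_Ico (hl : l ≠ 0) (hρ : ρ ∈ Ico (1 / ((l : ℝ) + 1)) (1 / l)) :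
    gammaScale l ρ = (l : ℝ) ^ (l + 1) / ((l : ℝ) + 1) ^ (l - 1) := by
  rw [gammaScale, if_neg hl, if_neg (not_le.2 hρ.2), if_pos hρ.1]

theorem gammaScale_of_lt (hl : l ≠ 0) (hρ : ρ < 1 / ((l : ℝ) + 1)) :
    gammaScale l ρ = l * (1 - ρ) ^ (l - 1) := by
  have hρ' : ρ < 1 / (l : ℝ) :=
    hρ.trans_le <| one_div_le_one_div_of_le (by positivity) (by linarith)
  rw [gammaScale, if_neg hl, if_neg (not_le.2 hρ'), if_neg (not_le.2 hρ)]

end gammaScale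

/-- For an integer `l ≥ 1`, `∫_0^∞ γ_l(ρ) dρ = 1`. -/
theorem stmt1 (l : ℕ) (hl : 1 ≤ l) :
    ∫ ρ in Set.Ioi (0:ℝ), gammaScale l ρ = 1 := by
  have hl0 : l ≠ 0 := Nat.one_le_iff_ne_zero.1 hl
  have hL : (0 : ℝ) < l := by positivity
  set a : ℝ := 1 / ((l : ℝ) + 1)
  set b : ℝ := 1 / (l : ℝ)
  set c : ℝ := (l : ℝ) ^ (l + 1) / ((l : ℝ) + 1) ^ (l - 1)
  have ha : 0 ≤ a := by positivity
  have hab : a ≤ b := one_div_le_one_div_of_le hL (by linarith)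
  have h_low : EqOn (fun ρ => (l : ℝ) * (1 - ρ) ^ (l - 1)) (gammaScale l) (uIoo 0 a) := by
    intro ρ hρ
    rw [uIoo_of_le ha] at hρ
    exact (gammaScale_of_lt hl0 hρ.2).symm
  have h_mid : EqOn (fun _ => c) (gammaScale l) (uIoo a b) := by
    intro ρ hρ
    rw [uIoo_of_le hab] at hρ
    exact (gammaScale_of_mem_Ico hl0 (Ioo_subset_Ico_self hρ)).symm
  have h_high : EqOn (gammaScale l) 0 (Ioi b) := fun ρ hρ => gammaScale_of_inv_le hl0 hρ.le
  have h_mass : (b - a) * c = (1 - a) ^ l := by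
    obtain ⟨n, rfl⟩ := Nat.exists_eq_add_one_of_ne_zero hl0
    simp only [a, b, c, Nat.add_sub_cancel]
    rw [one_sub_div (by positivity), add_sub_cancel_right, div_pow]
    field_simp
    ring
  rw [integral_Ioi_eq_intervalIntegral_of_eqOn_Ioi (ha.trans hab) h_high,
    ← integral_add_adjacent_intervals
      ((by fun_prop : Continuous _).intervalIntegrable _ _ |>.congr_uIoo h_low)
      (intervalIntegrable_const.congr_uIoo h_mid),
    ← integral_congr_uIoo h_low, ← integral_congr_uIoo h_mid,
    integral_natCast_mul_one_sub_pow, intervalIntegral.integral_const, smul_eq_mul, h_mass]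
  ring
end

section
/- With γ_l as defined (l ≥ 1), for every R ∈ [0, 1/(l+1)] one has ∫_R^∞ γ_l(ρ) dρ = (1-R)^l, for every R ≥ 1/l one has ∫_R^∞ γ_l(ρ) dρ = 0, and for R ∈ [1/(l+1), 1/l] the value ∫_R^∞ γ_l(ρ) dρ lies in the interval [0, (1-R)^l]. -/
open MeasureTheory Set intervalIntegral

theorem pow_add_mul_sub_le_pow {α : Type*} [Field α] [LinearOrder α] [IsStrictOrderedRing α]
    {x y : α} (hy : 0 < y) (hxy : -y ≤ x) (n : ℕ) :
    y ^ n + n * y ^ (n - 1) * (x - y) ≤ x ^ n := by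
  cases n with
  | zero => simp
  | succ n =>
    have hbern := one_add_mul_sub_le_pow (a := x / y) (by rwa [le_div_iff₀ hy, neg_one_mul]) (n + 1)
    rw [Nat.add_sub_cancel]
    calc y ^ (n + 1) + ↑(n + 1) * y ^ n * (x - y)
        = y ^ (n + 1) * (1 + ↑(n + 1) * (x / y - 1)) := by field_simp; ring
      _ ≤ y ^ (n + 1) * (x / y) ^ (n + 1) := by gcongr
      _ = x ^ (n + 1) := by rw [div_pow, mul_div_cancel₀ _ (pow_ne_zero _ hy.ne')]

noncomputable def gammaPlateau (l : ℕ) : ℝ := (l:ℝ) ^ (l + 1) / ((l:ℝ) + 1) ^ (l - 1)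

section gammaScale

variable {l : ℕ} {ρ R : ℝ}

lemma one_div_succ_lt_one_div (hl : l ≠ 0) : 1 / ((l:ℝ) + 1) < 1 / l :=
  one_div_lt_one_div_of_lt (by positivity) (lt_add_one _)

lemma gammaScale_of_one_div_le (hl : l ≠ 0) (h : 1 / (l:ℝ) ≤ ρ) : gammaScale l ρ = 0 := by
  rw [gammaScale, if_neg hl, if_pos h]

lemma gammaScale_of_mem_Ico_s2 (hl : l ≠ 0) (h : ρ ∈ Ico (1 / ((l:ℝ) + 1)) (1 / l)) :
    gammaScale l ρ = gammaPlateau l := by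
  rw [gammaScale, if_neg hl, if_neg h.2.not_ge, if_pos h.1, gammaPlateau]

lemma gammaScale_of_lt_one_div_succ (hl : l ≠ 0) (h : ρ < 1 / ((l:ℝ) + 1)) :
    gammaScale l ρ = l * (1 - ρ) ^ (l - 1) := by
  rw [gammaScale, if_neg hl, if_neg (h.trans (one_div_succ_lt_one_div hl)).not_ge, if_neg h.not_ge]

lemma gammaPlateau_eq (hl : l ≠ 0) :
    gammaPlateau l = l ^ 2 * (1 - 1 / ((l:ℝ) + 1)) ^ (l - 1) := by
  obtain ⟨m, rfl⟩ := Nat.exists_eq_add_one_of_ne_zero hl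
  rw [gammaPlateau, Nat.add_sub_cancel, one_sub_div (by positivity), add_sub_cancel_right,
    div_pow]
  field_simp
  ring

lemma gammaPlateau_mul_eq (hl : l ≠ 0) :
    gammaPlateau l * (1 / l - 1 / ((l:ℝ) + 1)) = (1 - 1 / ((l:ℝ) + 1)) ^ l := by
  obtain ⟨m, rfl⟩ := Nat.exists_eq_add_one_of_ne_zero hl
  rw [gammaPlateau_eq hl, Nat.add_sub_cancel, one_sub_div (by positivity), add_sub_cancel_right,
    div_pow, div_pow]
  field_simp
  ring

lemma gammaPlateau_mul_sub_le (hl : l ≠ 0) (haR : 1 / ((l:ℝ) + 1) ≤ R) (hR : R ≤ 1) :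
    gammaPlateau l * (1 / l - R) ≤ (1 - R) ^ l := by
  set t₀ : ℝ := 1 - 1 / ((l:ℝ) + 1)
  have ht₀ : 0 < t₀ := by
    have : 1 / ((l:ℝ) + 1) < 1 := (div_lt_one (by positivity)).2 (by simp [Nat.pos_of_ne_zero hl])
    linarith
  have hslope : (l:ℝ) * t₀ ^ (l - 1) ≤ gammaPlateau l := by
    have hl1 : (1:ℝ) ≤ l := Nat.one_le_cast.2 (Nat.one_le_iff_ne_zero.2 hl)
    rw [gammaPlateau_eq hl]
    gcongr
    nlinarith
  calc gammaPlateau l * (1 / l - R)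
      = t₀ ^ l - gammaPlateau l * (R - 1 / ((l:ℝ) + 1)) := by
        rw [← gammaPlateau_mul_eq hl]; ring
    _ ≤ t₀ ^ l - l * t₀ ^ (l - 1) * (R - 1 / ((l:ℝ) + 1)) := by
        gcongr
    _ = t₀ ^ l + l * t₀ ^ (l - 1) * ((1 - R) - t₀) := by ring
    _ ≤ (1 - R) ^ l := pow_add_mul_sub_le_pow ht₀ (by linarith) l

lemma setIntegral_Ioi_gammaScale_eq_intervalIntegral (hl : l ≠ 0) (hR : R ≤ 1 / l) :
    ∫ ρ in Ioi R, gammaScale l ρ = ∫ ρ in R..1 / l, gammaScale l ρ := by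
  rw [integral_of_le hR]
  refine setIntegral_eq_of_subset_of_forall_sdiff_eq_zero measurableSet_Ioi Ioc_subset_Ioi_self
    fun ρ hρ => gammaScale_of_one_div_le hl ?_
  by_contra! h
  exact hρ.2 ⟨hρ.1, h.le⟩

lemma intervalIntegral_gammaScale_of_one_div_succ_le (hl : l ≠ 0) (haR : 1 / ((l:ℝ) + 1) ≤ R)
    (hR : R ≤ 1 / l) :
    ∫ ρ in R..1 / l, gammaScale l ρ = gammaPlateau l * (1 / l - R) := by
  rw [integral_congr_Ioo_of_le hR (g := fun _ => gammaPlateau l)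
    fun ρ hρ => gammaScale_of_mem_Ico_s2 hl ⟨haR.trans hρ.1.le, hρ.2⟩,
    intervalIntegral.integral_const, smul_eq_mul, mul_comm]

lemma intervalIntegrable_gammaScale_of_le_one_div_succ (hl : l ≠ 0) (hR : R ≤ 1 / ((l:ℝ) + 1)) :
    IntervalIntegrable (gammaScale l) volume R (1 / ((l:ℝ) + 1)) := by
  refine (by fun_prop : Continuous fun ρ : ℝ => l * (1 - ρ) ^ (l - 1)).intervalIntegrable R _
    |>.congr_uIoo fun ρ hρ => ?_
  rw [uIoo_of_le hR] at hρ
  exact (gammaScale_of_lt_one_div_succ hl hρ.2).symm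

lemma intervalIntegral_gammaScale_of_le_one_div_succ (hl : l ≠ 0) (hR : R ≤ 1 / ((l:ℝ) + 1)) :
    ∫ ρ in R..1 / ((l:ℝ) + 1), gammaScale l ρ = (1 - R) ^ l - (1 - 1 / ((l:ℝ) + 1)) ^ l := by
  have hderiv (ρ : ℝ) : HasDerivAt (fun ρ : ℝ => -(1 - ρ) ^ l) (l * (1 - ρ) ^ (l - 1)) ρ := by
    simpa using (((hasDerivAt_id' ρ).const_sub 1).fun_pow l).fun_neg
  rw [integral_eq_sub_of_hasDerivAt_of_le (f := fun ρ : ℝ => -(1 - ρ) ^ l) hR (by fun_prop)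
    (fun ρ hρ => gammaScale_of_lt_one_div_succ hl hρ.2 ▸ hderiv ρ)
    (intervalIntegrable_gammaScale_of_le_one_div_succ hl hR)]
  ring

lemma setIntegral_Ioi_gammaScale_of_le_one_div_succ (hl : l ≠ 0) (hR : R ≤ 1 / ((l:ℝ) + 1)) :
    ∫ ρ in Ioi R, gammaScale l ρ = (1 - R) ^ l := by
  have hab := one_div_succ_lt_one_div hl
  have hplateau : IntervalIntegrable (gammaScale l) volume (1 / ((l:ℝ) + 1)) (1 / l) :=
    intervalIntegrable_const.congr_uIoo fun ρ hρ => by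
      rw [uIoo_of_le hab.le] at hρ
      exact (gammaScale_of_mem_Ico_s2 hl ⟨hρ.1.le, hρ.2⟩).symm
  rw [setIntegral_Ioi_gammaScale_eq_intervalIntegral hl (hR.trans hab.le),
    ← integral_add_adjacent_intervals
      (intervalIntegrable_gammaScale_of_le_one_div_succ hl hR) hplateau,
    intervalIntegral_gammaScale_of_le_one_div_succ hl hR,
    intervalIntegral_gammaScale_of_one_div_succ_le hl le_rfl hab.le, gammaPlateau_mul_eq hl]
  ring

end gammaScale

/-- tail integrals of `γ_l`. -/
theorem stmt2 (l : ℕ) (hl : 1 ≤ l) :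
    (∀ R ∈ Set.Icc (0:ℝ) (1/((l:ℝ)+1)),
      ∫ ρ in Set.Ioi R, gammaScale l ρ = (1-R)^l) ∧
    (∀ R : ℝ, 1/(l:ℝ) ≤ R → ∫ ρ in Set.Ioi R, gammaScale l ρ = 0) ∧
    (∀ R ∈ Set.Icc (1/((l:ℝ)+1)) (1/(l:ℝ)),
      (∫ ρ in Set.Ioi R, gammaScale l ρ) ∈ Set.Icc (0:ℝ) ((1-R)^l)) := by
  have hl₀ : l ≠ 0 := Nat.one_le_iff_ne_zero.1 hl
  refine ⟨fun R hR => setIntegral_Ioi_gammaScale_of_le_one_div_succ hl₀ hR.2,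
    fun R hR => setIntegral_eq_zero_of_forall_eq_zero fun ρ hρ =>
      gammaScale_of_one_div_le hl₀ (hR.trans hρ.le),
    fun R ⟨haR, hRb⟩ => ?_⟩
  have hb : 1 / (l:ℝ) ≤ 1 := (div_le_one (by positivity)).2 (Nat.one_le_cast.2 hl)
  rw [setIntegral_Ioi_gammaScale_eq_intervalIntegral hl₀ hRb,
    intervalIntegral_gammaScale_of_one_div_succ_le hl₀ haR hRb]
  exact ⟨mul_nonneg (by rw [gammaPlateau]; positivity) (sub_nonneg.2 hRb),
    gammaPlateau_mul_sub_le hl₀ haR (hRb.trans hb)⟩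
end

section
/- With the wavelet family Ψ_ρ defined by a_l^0(Ψ_ρ) = sqrt(ρ · N(n,l) · γ_l(ρ)) and a_l^k(Ψ_ρ) = 0 for k ≠ 0, and weight α(ρ) = 1/ρ, the admissibility condition holds: for every l ∈ ℕ₀, Σ_{k∈M_{n-1}(l)} ∫_0^∞ |a_l^k(Ψ_ρ)|² (1/ρ) dρ = N(n,l). -/
open MeasureTheory Set

lemma gammaScale_nonneg (l : ℕ) (ρ : ℝ) : 0 ≤ gammaScale l ρ := by
  unfold gammaScale
  split_ifs with _ _ hρ
  · exact indicator_nonneg (fun _ _ => zero_le_one) ρ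
  · exact le_rfl
  · positivity
  · have : 1 / ((l : ℝ) + 1) ≤ 1 := by rw [div_le_one (by positivity)]; linarith [l.cast_nonneg (α := ℝ)]
    have : 0 ≤ 1 - ρ := by linarith [not_le.mp hρ]
    positivity

lemma integral_gammaScale_zero : ∫ ρ in Ioi (0:ℝ), gammaScale 0 ρ = 1 := by
  have hIcc : Ioi (0:ℝ) ∩ Icc 1 2 = Icc 1 2 :=
    inter_eq_right.mpr fun x hx => one_pos.trans_le hx.1
  simp only [gammaScale, if_true]
  rw [setIntegral_indicator measurableSet_Icc, hIcc]
  norm_num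

lemma gammaScale_succ (m : ℕ) :
    gammaScale (m + 1) =
      (Iio (1 / ((m : ℝ) + 2))).indicator (fun ρ => ((m : ℝ) + 1) * (1 - ρ) ^ m) +
      (Ico (1 / ((m : ℝ) + 2)) (1 / ((m : ℝ) + 1))).indicator
        (fun _ => ((m : ℝ) + 1) ^ (m + 2) / ((m : ℝ) + 2) ^ m) := by
  have hbc : 1 / ((m : ℝ) + 2) ≤ 1 / ((m : ℝ) + 1) :=
    one_div_le_one_div_of_le (by positivity) (by linarith)
  ext ρ
  simp only [gammaScale, Nat.succ_ne_zero, if_false, Nat.cast_succ, Nat.add_sub_cancel, add_assoc,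
    one_add_one_eq_two, Pi.add_apply, indicator, mem_Iio, mem_Ico]
  split_ifs <;> first | (exfalso; grind) | ring

lemma integral_mul_one_sub_pow (m : ℕ) (b : ℝ) :
    ∫ ρ in (0:ℝ)..b, ((m : ℝ) + 1) * (1 - ρ) ^ m = 1 - (1 - b) ^ (m + 1) := by
  have hderiv : ∀ x ∈ uIcc 0 b,
      HasDerivAt (fun ρ : ℝ => -(1 - ρ) ^ (m + 1)) (((m : ℝ) + 1) * (1 - x) ^ m) x := by
    intro x _
    refine (((hasDerivAt_id' x).const_sub 1).fun_pow (m + 1)).fun_neg.congr_deriv ?_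
    rw [Nat.add_sub_cancel]
    push_cast
    ring
  rw [intervalIntegral.integral_eq_sub_of_hasDerivAt hderiv
    ((by fun_prop : Continuous fun ρ : ℝ => ((m : ℝ) + 1) * (1 - ρ) ^ m).intervalIntegrable _ _)]
  ring

lemma gammaScale_masses_sum (m : ℕ) :
    1 - (1 - 1 / ((m : ℝ) + 2)) ^ (m + 1) +
      ((m : ℝ) + 1) ^ (m + 2) / ((m : ℝ) + 2) ^ m * (1 / ((m : ℝ) + 1) - 1 / ((m : ℝ) + 2)) = 1 := by
  have h1 : 1 - 1 / ((m : ℝ) + 2) = ((m : ℝ) + 1) / ((m : ℝ) + 2) := by field_simp; ring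
  rw [h1, div_pow]
  field_simp
  ring

lemma integral_gammaScale_succ (m : ℕ) : ∫ ρ in Ioi (0:ℝ), gammaScale (m + 1) ρ = 1 := by
  rw [gammaScale_succ]
  set b : ℝ := 1 / ((m : ℝ) + 2)
  set c : ℝ := 1 / ((m : ℝ) + 1)
  have hb : 0 < b := by positivity
  have hbc : b ≤ c := one_div_le_one_div_of_le (by positivity) (by linarith)
  have hIoo : Ioi (0:ℝ) ∩ Iio b = Ioo 0 b := Ioi_inter_Iio
  have hIco : Ioi (0:ℝ) ∩ Ico b c = Ico b c := inter_eq_right.mpr fun x hx => hb.trans_le hx.1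
  have hint₁ : IntegrableOn ((Iio b).indicator fun ρ => ((m : ℝ) + 1) * (1 - ρ) ^ m) (Ioi 0) := by
    rw [integrableOn_indicator_iff measurableSet_Iio, inter_comm, hIoo]
    exact (Continuous.integrableOn_Icc (by fun_prop)).mono_set Ioo_subset_Icc_self
  have hint₂ : IntegrableOn ((Ico b c).indicator fun _ => ((m : ℝ) + 1) ^ (m + 2) / ((m : ℝ) + 2) ^ m)
      (Ioi 0) :=
    (integrable_indicator_iff measurableSet_Ico).mpr (integrableOn_const measure_Ico_lt_top.ne)
      |>.integrableOn
  rw [integral_add' hint₁ hint₂, setIntegral_indicator measurableSet_Iio,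
    setIntegral_indicator measurableSet_Ico, hIoo, hIco, ← integral_Ioc_eq_integral_Ioo,
    ← intervalIntegral.integral_of_le hb.le, integral_mul_one_sub_pow, setIntegral_const,
    measureReal_def, Real.volume_Ico, ENNReal.toReal_ofReal (by linarith), smul_eq_mul, mul_comm]
  exact gammaScale_masses_sum m

theorem integral_gammaScale (l : ℕ) : ∫ ρ in Ioi (0:ℝ), gammaScale l ρ = 1 := by
  cases l with
  | zero => exact integral_gammaScale_zero
  | succ m => exact integral_gammaScale_succ m

theorem stmt12_general
    (N : ℕ → ℝ)
    (M : ℕ → Type) [∀ l, Fintype (M l)] (hcard : ∀ l, (Fintype.card (M l) : ℝ) = N l)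
    (k0 : ∀ l, M l) (a : ∀ l, M l → ℝ → ℝ)
    (ha0 : ∀ l ρ, a l (k0 l) ρ = Real.sqrt (ρ * N l * gammaScale l ρ))
    (ha : ∀ l k ρ, k ≠ k0 l → a l k ρ = 0) :
    ∀ l, ∑ k : M l, ∫ ρ in Set.Ioi (0:ℝ), |a l k ρ|^2 * (1/ρ) = N l := by
  intro l
  have hN : 0 ≤ N l := hcard l ▸ Nat.cast_nonneg _
  have hdensity : EqOn (fun ρ => |a l (k0 l) ρ| ^ 2 * (1 / ρ)) (fun ρ => N l * gammaScale l ρ)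
      (Ioi 0) := by
    intro ρ (hρ : 0 < ρ)
    simp only [ha0, sq_abs]
    rw [Real.sq_sqrt (by have := gammaScale_nonneg l ρ; positivity)]
    field_simp
  rw [Fintype.sum_eq_single (k0 l) fun k hk => by simp [ha l k _ hk],
    setIntegral_congr_fun measurableSet_Ioi hdensity, integral_const_mul, integral_gammaScale,
    mul_one]

/-- for the wavelet family with `a_l^0(Ψ_ρ) = sqrt(ρ N(n,l) γ_l(ρ))` and
`a_l^k(Ψ_ρ) = 0` for `k ≠ 0`, and weight `α(ρ) = 1/ρ`, the admissibility condition
`Σ_{k ∈ M_{n-1}(l)} ∫_0^∞ |a_l^k(Ψ_ρ)|² (1/ρ) dρ = N(n,l)` holds for every `l`. -/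
theorem stmt12 (n : ℕ) (hn : 2 ≤ n)
    (N : ℕ → ℝ)
    (hN : ∀ l, N l = ((2*l+n-1 : ℕ) : ℝ) * (Nat.factorial (l+n-2)) /
      ((Nat.factorial l) * (Nat.factorial (n-1))))
    (M : ℕ → Type) [∀ l, Fintype (M l)] (hcard : ∀ l, (Fintype.card (M l) : ℝ) = N l)
    (k0 : ∀ l, M l) (a : ∀ l, M l → ℝ → ℝ)
    (ha0 : ∀ l ρ, a l (k0 l) ρ = Real.sqrt (ρ * N l * gammaScale l ρ))
    (ha : ∀ l k ρ, k ≠ k0 l → a l k ρ = 0) :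
    ∀ l, ∑ k : M l, ∫ ρ in Set.Ioi (0:ℝ), |a l k ρ|^2 * (1/ρ) = N l :=
  stmt12_general N M hcard k0 a ha0 ha
end
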